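/- In a simple loop Φ ⊢ B →* C[σB] where each D ∈ |C| satisfies Φ ⊢ σD →* C'[D] with |C'| = ∅, iterating the loop yields Φ ⊢ σⁿD →* C'ⁿ[D] for every n ≥ 0, where C'ⁿ denotes the n-fold nesting of the context C' (so each iteration of the loop spawns no further loops). -/

import Mathlib

abbrev Var := String
abbrev FSym := String

/-- First-order applicative terms `t ::= x | K t₁ … tₙ`. -/
inductive Tm where
  | var : Var → Tm
  | node : FSym → List Tm → Tm

/-- Substitutions map term variables to terms. -/
abbrev Sb := Var → Tm

def Tm.subst (σ : Sb) : Tm → Tm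
  | .var x => σ x
  | .node k ts => .node k (ts.attach.map fun t => Tm.subst σ t.1)
decreasing_by all_goals (have := List.sizeOf_lt_of_mem t.2; simp_all; omega)

inductive Tm.HasVar : Tm → Var → Prop where
  | var : Tm.HasVar (.var x) x
  | node : t ∈ ts → Tm.HasVar t x → Tm.HasVar (.node k ts) x

inductive Tm.HasConst : Tm → FSym → Prop where
  | head : Tm.HasConst (.node c ts) c
  | arg : t ∈ ts → Tm.HasConst t c → Tm.HasConst (.node k ts) c

def Tm.fvList : Tm → List Var
  | .var x => [x]
  | .node _ ts => ts.attach.flatMap fun t => Tm.fvList t.1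
decreasing_by all_goals (have := List.sizeOf_lt_of_mem t.2; simp_all; omega)

/-- The multiset `Σ(t) ∪ FVar(t)` of function-symbol (inl) and variable (inr) occurrences. -/
def Tm.symbols : Tm → Multiset (FSym ⊕ Var)
  | .var x => {Sum.inr x}
  | .node k ts => Sum.inl k ::ₘ ((ts.attach.map fun t => Tm.symbols t.1).sum)
decreasing_by all_goals (have := List.sizeOf_lt_of_mem t.2; simp_all; omega)

def Sb.comp (σ τ : Sb) : Sb := fun x => (τ x).subst σ

def Sb.pow (σ : Sb) : ℕ → Sb
  | 0 => Tm.var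
  | n + 1 => Sb.comp σ (Sb.pow σ n)
/-- Atomic formulas `P t₁ … tₙ`. -/
structure Atm where
  pred : FSym
  args : List Tm

def Atm.subst (σ : Sb) (A : Atm) : Atm := ⟨A.pred, A.args.map (Tm.subst σ)⟩
def Atm.HasVar (A : Atm) (x : Var) : Prop := ∃ t ∈ A.args, t.HasVar x
def Atm.HasConst (A : Atm) (c : FSym) : Prop := ∃ t ∈ A.args, t.HasConst c
def Atm.fvList (A : Atm) : List Var := A.args.flatMap Tm.fvList
def Atm.symbols (A : Atm) : Multiset (FSym ⊕ Var) := (A.args.map Tm.symbols).sum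

/-- A Horn clause `B₁, …, Bₙ ⇒ A` with body `Bᵢ` and head `A`. -/
structure Cl where
  body : List Atm
  head : Atm

/-- Horn formulas have no existential variables: every variable of the body occurs in the head. -/
def Cl.Wf (c : Cl) : Prop := ∀ B ∈ c.body, ∀ x, B.HasVar x → c.head.HasVar x

/-- An axiom environment: Horn clauses labelled by distinct evidence constants κ. -/
def EnvWf (Φ : List (FSym × Cl)) : Prop :=
  (∀ p ∈ Φ, p.2.Wf) ∧ (Φ.map Prod.fst).Nodup

/-- Paterson's condition for a clause. -/
def Cl.Paterson (c : Cl) : Prop := ∀ B ∈ c.body, B.symbols < c.head.symbols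

/-- (Extended) mixed terms `q ::= A | κ | α | λα.q | μα.q | q q'`, together with
numbered holes so that the same syntax also serves as (multi-hole) mixed-term contexts. -/
inductive Mx where
  | atom : Atm → Mx
  | kappa : FSym → Mx
  | evar : Var → Mx
  | lam : Var → Mx → Mx
  | mu : Var → Mx → Mx
  | app : Mx → Mx → Mx
  | hole : ℕ → Mx

/-- `e e₁ … eₙ`. -/
def appsMx (e : Mx) (es : List Mx) : Mx := es.foldl .app e

/-- `λα₁…λαₙ.e`. -/
def lamList (as : List Var) (e : Mx) : Mx := as.foldr .lam e

/-- The list of atomic formulas occurring in a mixed term (or context): `|C|`. -/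
def Mx.atoms : Mx → List Atm
  | .atom A => [A]
  | .app q r => q.atoms ++ r.atoms
  | .lam _ q => q.atoms
  | .mu _ q => q.atoms
  | _ => []

/-- Fill the holes of a context. -/
def Mx.fill (f : ℕ → Mx) : Mx → Mx
  | .hole i => f i
  | .app q r => .app (q.fill f) (r.fill f)
  | .lam a q => .lam a (q.fill f)
  | .mu a q => .mu a (q.fill f)
  | q => q

/-- Fill all holes of a context with the same mixed term (single-hole case `C[q]`). -/
def Mx.fill1 (C q : Mx) : Mx := C.fill (fun _ => q)

/-- Contexts `C ::= • | C q | q C` built from application only. -/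
inductive IsAppCtx : Mx → Prop where
  | hole : IsAppCtx (.hole n)
  | appL : IsAppCtx C → IsAppCtx (.app C q)
  | appR : IsAppCtx C → IsAppCtx (.app q C)

/-- Apply a term substitution inside the atoms of a mixed term. -/
def Mx.tsubst (σ : Sb) : Mx → Mx
  | .atom A => .atom (A.subst σ)
  | .app q r => .app (q.tsubst σ) (r.tsubst σ)
  | .lam a q => .lam a (q.tsubst σ)
  | .mu a q => .mu a (q.tsubst σ)
  | q => q

/-- Substitute evidence `s` for the evidence variable `α` (capture-naive). -/
def Mx.esubst (a : Var) (s : Mx) : Mx → Mx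
  | .evar b => if b = a then s else .evar b
  | .lam b q => if b = a then .lam b q else .lam b (Mx.esubst a s q)
  | .mu b q => if b = a then .mu b q else .mu b (Mx.esubst a s q)
  | .app q r => .app (Mx.esubst a s q) (Mx.esubst a s r)
  | q => q

/-- Pure (first-order) evidence terms `e ::= κ | e e'`. -/
inductive IsEvidence : Mx → Prop where
  | kappa : IsEvidence (.kappa k)
  | app : IsEvidence q → IsEvidence r → IsEvidence (.app q r)

inductive IsSpine : Mx → Prop where
  | kappa : IsSpine (.kappa k)
  | app : IsSpine q → IsSpine (.app q r)

/-- Head normal forms `λα₁…λαₙ.κ e₁…eₘ`. -/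
inductive IsHNF : Mx → Prop where
  | spine : IsSpine q → IsHNF q
  | lam : IsHNF q → IsHNF (.lam a q)

/-- Terms whose head constant is `κ`: `κ e₁ … eₘ`. -/
inductive HeadK (k : FSym) : Mx → Prop where
  | kappa : HeadK k (.kappa k)
  | app : HeadK k q → HeadK k (.app q r)

def Mx.IsRedex : Mx → Prop
  | .mu _ _ => True
  | .app (.lam _ _) _ => True
  | _ => False

def Mx.IsName : Mx → Prop
  | .kappa _ => True
  | .evar _ => True
  | _ => False
/-- Big-step resolution with evidence: `Φ ⊢ A ⇓ e`. -/
inductive BigStep (Φ : List (FSym × Cl)) : Atm → Mx → Prop where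
  | res : ∀ (κ : FSym) (c : Cl) (σ : Sb) (es : List Mx),
      (κ, c) ∈ Φ →
      es.length = c.body.length →
      (∀ i (h : i < c.body.length) (h' : i < es.length),
        BigStep Φ (Atm.subst σ (c.body.get ⟨i, h⟩)) (es.get ⟨i, h'⟩)) →
      BigStep Φ (Atm.subst σ c.head) (appsMx (.kappa κ) es)

/-- Small-step resolution `Φ ⊢ C[σA] → C[κ (σB₁) … (σBₙ)]`, with contexts `C ::= • | C q | q C`. -/
inductive Step (Φ : List (FSym × Cl)) : Mx → Mx → Prop where
  | res : ∀ (κ : FSym) (c : Cl) (σ : Sb),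
      (κ, c) ∈ Φ →
      Step Φ (.atom (c.head.subst σ)) (appsMx (.kappa κ) (c.body.map fun B => .atom (B.subst σ)))
  | appL : Step Φ q q' → Step Φ (.app q r) (.app q' r)
  | appR : Step Φ r r' → Step Φ (.app q r) (.app q r')

/-- Weak head evidence reduction (contexts `C ::= • | C e`). -/
inductive WH : Mx → Mx → Prop where
  | beta : WH (.app (.lam a e) e') (Mx.esubst a e' e)
  | mu : WH (.mu a e) (Mx.esubst a (.mu a e) e)
  | appL : WH e e'' → WH (.app e e') (.app e'' e')

/-- Termination of weak head reduction from `e`. -/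
def WHTerminates (e : Mx) : Prop := Acc (fun x y => WH y x) e

/-- Small-step evidence reduction on mixed terms; only outermost redexes are contracted. -/
inductive EStep : Mx → Mx → Prop where
  | beta : EStep (.app (.lam a q) r) (Mx.esubst a r q)
  | mu : EStep (.mu a q) (Mx.esubst a (.mu a q) q)
  | appL : ¬ (Mx.app q r).IsRedex → EStep q q' → EStep (.app q r) (.app q' r)
  | appR : ¬ (Mx.app q r).IsRedex → EStep r r' → EStep (.app q r) (.app q r')

/-- Formulas `F ::= A | F ⇒ F' | ∀x.F`. -/
inductive Fm where
  | atom : Atm → Fm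
  | imp : Fm → Fm → Fm
  | all : Var → Fm → Fm

/-- `∀x₁…∀xₙ.F`. -/
def Fm.alls (xs : List Var) (F : Fm) : Fm := xs.foldr .all F

/-- The Horn formula `B₁, …, Bₙ ⇒ A` as a formula. -/
def hornFm (Bs : List Atm) (A : Atm) : Fm :=
  Bs.foldr (fun B F => .imp (.atom B) F) (.atom A)

def Fm.substF (γ : Sb) : Fm → Fm
  | .atom A => .atom (A.subst γ)
  | .imp F G => .imp (F.substF γ) (G.substF γ)
  | .all x F => .all x (F.substF fun y => if y = x then Tm.var y else γ y)

/-- `[t/x]F`. -/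
def Fm.substT (x : Var) (t : Tm) (F : Fm) : Fm :=
  F.substF fun y => if y = x then t else Tm.var y

inductive Fm.HasFV : Fm → Var → Prop where
  | atom : A.HasVar x → Fm.HasFV (.atom A) x
  | impL : Fm.HasFV F x → Fm.HasFV (.imp F G) x
  | impR : Fm.HasFV G x → Fm.HasFV (.imp F G) x
  | all : Fm.HasFV F x → x ≠ y → Fm.HasFV (.all y F) x

inductive Fm.HasConst : Fm → FSym → Prop where
  | atom : A.HasConst c → Fm.HasConst (.atom A) c
  | impL : Fm.HasConst F c → Fm.HasConst (.imp F G) c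
  | impR : Fm.HasConst G c → Fm.HasConst (.imp F G) c
  | all : Fm.HasConst F c → Fm.HasConst (.all y F) c

/-- Environments for corecursive resolution / Howard's type system:
formulas supported by arbitrary evidence. -/
abbrev Ctx := List (Mx × Fm)

/-- `c` is a fresh constant w.r.t. environment `Φ` and formula `F`. -/
def FreshConst (c : FSym) (Φ : Ctx) (F : Fm) : Prop :=
  ¬ F.HasConst c ∧ ∀ p ∈ Φ, ¬ p.2.HasConst c

/-- `γ` instantiates exactly the free variables of `F` with fresh term constants (eigenvariables). -/
def Eigen (γ : Sb) (Φ : Ctx) (F : Fm) : Prop :=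
  ∀ x, (F.HasFV x → ∃ c, γ x = Tm.node c [] ∧ FreshConst c Φ F) ∧
       (¬ F.HasFV x → γ x = Tm.var x)

/-- Corecursive resolution `Φ ⊢ F ⇓ e`. -/
inductive CoRes : Ctx → Fm → Mx → Prop where
  | res : ∀ (Φ : Ctx) (e : Mx) (xs : List Var) (Bs : List Atm) (A : Atm) (σ : Sb) (es : List Mx),
      (e, Fm.alls xs (hornFm Bs A)) ∈ Φ →
      es.length = Bs.length →
      (∀ i (h : i < Bs.length) (h' : i < es.length),
        CoRes Φ (.atom ((Bs.get ⟨i, h⟩).subst σ)) (es.get ⟨i, h'⟩)) →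
      CoRes Φ (.atom (A.subst σ)) (appsMx e es)
  | mu : ∀ (Φ : Ctx) (F : Fm) (a : Var) (e : Mx),
      CoRes ((.evar a, F) :: Φ) F e → IsHNF e → CoRes Φ F (.mu a e)
  | lam : ∀ (Φ : Ctx) (G B : Fm) (a : Var) (e : Mx) (γ : Sb),
      Eigen γ Φ (.imp G B) →
      CoRes ((.evar a, G.substF γ) :: Φ) (B.substF γ) e →
      CoRes Φ (.imp G B) (.lam a e)

/-- Howard's type system (with the guarded Mu rule). -/
inductive Typing : Ctx → Mx → Fm → Prop where
  | assump : (e, F) ∈ Φ → Typing Φ e F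
  | app : Typing Φ e₁ F' → Typing Φ e₂ (.imp F' F) → Typing Φ (.app e₂ e₁) F
  | abs : Typing ((.evar a, F') :: Φ) e F → Typing Φ (.lam a e) (.imp F' F)
  | gen : Typing Φ e F → (∀ p ∈ Φ, ¬ p.2.HasFV x) → Typing Φ e (.all x F)
  | inst : Typing Φ e (.all x F) → Typing Φ e (F.substT x t)
  | mu : Typing ((.evar a, F) :: Φ) e F → IsHNF e → Typing Φ (.mu a e) F

/-- Generalized resolution on sets of (environment, goal) pairs. -/
inductive GRStep : Multiset (Ctx × Fm) → Multiset (Ctx × Fm) → Prop where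
  | res : ∀ (S : Multiset (Ctx × Fm)) (Φ : Ctx) (a : Mx) (xs : List Var)
      (Gs : List Atm) (A : Atm) (σ : Sb),
      (a, Fm.alls xs (hornFm Gs A)) ∈ Φ →
      GRStep ((Φ, Fm.atom (A.subst σ)) ::ₘ S)
             (↑(Gs.map fun G => (Φ, Fm.atom (G.subst σ))) + S)
  | lam : ∀ (S : Multiset (Ctx × Fm)) (Φ : Ctx) (G B : Fm) (a : Var) (γ : Sb),
      Eigen γ Φ (.imp G B) →
      GRStep ((Φ, Fm.imp G B) ::ₘ S)
             (((((Mx.evar a, G.substF γ)) :: Φ, B.substF γ)) ::ₘ S)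
  | all : ∀ (S : Multiset (Ctx × Fm)) (Φ : Ctx) (x : Var) (F : Fm) (c : FSym),
      FreshConst c Φ (.all x F) →
      GRStep ((Φ, Fm.all x F) ::ₘ S) ((Φ, F.substT x (Tm.node c [])) ::ₘ S)

/-- A labelled Horn clause as a (universally closed) formula. -/
def Cl.toFm (c : Cl) : Fm :=
  Fm.alls c.head.fvList.dedup (hornFm c.body c.head)

/-- A Horn clause environment as a corecursive-resolution environment. -/
def toCtx (Φ : List (FSym × Cl)) : Ctx :=
  Φ.map fun p => (Mx.kappa p.1, p.2.toFm)

/-- `n`-fold nesting `C'ⁿ` of a context, with the substitution applied appropriately: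
`C'⁰ = •` and `C'ⁿ⁺¹ = (σⁿ C')[C'ⁿ]`. -/
def iterCtx (σ : Sb) (C : Mx) : ℕ → Mx
  | 0 => .hole 0
  | n + 1 => (C.tsubst (Sb.pow σ n)).fill1 (iterCtx σ C n)
mutual
/-- The least general anti-unifier `t ⊔ t'`, relative to an injective choice
function `φ` from pairs of terms to fresh variables. -/
def au (φ : Tm × Tm → Var) : Tm → Tm → Tm
  | .node k ts, .node k' ts' =>
      if k = k' ∧ ts.length = ts'.length then .node k (auList φ ts ts')
      else .var (φ (.node k ts, .node k' ts'))
  | t, t' => .var (φ (t, t'))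

def auList (φ : Tm × Tm → Var) : List Tm → List Tm → List Tm
  | t :: ts, t' :: ts' => au φ t t' :: auList φ ts ts'
  | _, _ => []
end

/-- The anti-unifier `P t₁ … tₙ ⊔ P t₁' … tₙ'` of two atomic formulas with the same predicate. -/
def auAtm (φ : Tm × Tm → Var) (A B : Atm) : Atm := ⟨A.pred, auList φ A.args B.args⟩

/-- Renaming of variables in a term. -/
def Tm.rename (ρ : Var → Var) (t : Tm) : Tm := t.subst fun x => Tm.var (ρ x)

def Atm.rename (ρ : Var → Var) (A : Atm) : Atm := A.subst fun x => Tm.var (ρ x)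

/-! Applying `σⁿ` to the reduction `σD →* C'[D]` gives `σⁿ⁺¹D →* (σⁿC')[σⁿD]`, because
resolution is stable under substitution and `σⁿ⁺¹ = σⁿ ∘ σ`; the `n`-th iterate can then be run
inside the hole of `σⁿC'`. Reductions may be performed inside `C'` because its holes do not lie
under a binder: `C'[D]` is reached from an atom, and resolution steps never create binders. -/

@[simp] theorem Tm.subst_var (σ : Sb) (x : Var) : Tm.subst σ (.var x) = σ x := by
  rw [Tm.subst]

theorem Tm.subst_node (σ : Sb) (k : FSym) (ts : List Tm) :
    Tm.subst σ (.node k ts) = .node k (ts.map (Tm.subst σ)) := by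
  rw [Tm.subst]
  simp

theorem Tm.subst_id : ∀ t : Tm, t.subst Tm.var = t
  | .var x => by simp
  | .node k ts => by
    rw [Tm.subst_node, List.map_congr_left (fun t _ => Tm.subst_id t), List.map_id']
termination_by t => sizeOf t
decreasing_by have := List.sizeOf_lt_of_mem ‹_›; simp_all; omega

theorem Tm.subst_subst (σ τ : Sb) : ∀ t : Tm, (t.subst τ).subst σ = t.subst (Sb.comp σ τ)
  | .var x => by simp [Sb.comp]
  | .node k ts => by
    rw [Tm.subst_node, Tm.subst_node, Tm.subst_node, List.map_map]
    exact congrArg _ (List.map_congr_left fun t _ => Tm.subst_subst σ τ t)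
termination_by t => sizeOf t
decreasing_by have := List.sizeOf_lt_of_mem ‹_›; simp_all; omega

theorem Atm.subst_id (A : Atm) : A.subst Tm.var = A := by
  simp [Atm.subst, List.map_congr_left fun t _ => Tm.subst_id t]

theorem Atm.subst_subst (σ τ : Sb) (A : Atm) :
    (A.subst τ).subst σ = A.subst (Sb.comp σ τ) := by
  simp [Atm.subst, Function.comp_def, Tm.subst_subst]

theorem Sb.pow_succ' (σ : Sb) (n : ℕ) : Sb.pow σ (n + 1) = Sb.comp (Sb.pow σ n) σ := by
  induction n with
  | zero => funext x; simp [Sb.pow, Sb.comp, Tm.subst_id]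
  | succ n ih =>
    funext x
    calc (Sb.pow σ (n + 1) x).subst σ
        = ((σ x).subst (Sb.pow σ n)).subst σ := by rw [ih]; rfl
      _ = (σ x).subst (Sb.pow σ (n + 1)) := by rw [Tm.subst_subst]; rfl

theorem Atm.subst_pow_succ (σ : Sb) (n : ℕ) (A : Atm) :
    A.subst (Sb.pow σ (n + 1)) = (A.subst σ).subst (Sb.pow σ n) := by
  rw [Atm.subst_subst, Sb.pow_succ']

theorem Mx.tsubst_fill (τ : Sb) (f : ℕ → Mx) : ∀ C : Mx,
    (C.fill f).tsubst τ = (C.tsubst τ).fill (fun i => (f i).tsubst τ)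
  | .atom _ | .kappa _ | .evar _ | .hole _ => rfl
  | .lam _ q | .mu _ q => by simp [Mx.fill, Mx.tsubst, Mx.tsubst_fill τ f q]
  | .app q r => by simp [Mx.fill, Mx.tsubst, Mx.tsubst_fill τ f q, Mx.tsubst_fill τ f r]

theorem Mx.fill_fill (f g : ℕ → Mx) : ∀ C : Mx,
    (C.fill f).fill g = C.fill (fun i => (f i).fill g)
  | .atom _ | .kappa _ | .evar _ | .hole _ => rfl
  | .lam _ q | .mu _ q => by simp [Mx.fill, Mx.fill_fill f g q]
  | .app q r => by simp [Mx.fill, Mx.fill_fill f g q, Mx.fill_fill f g r]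

theorem Mx.tsubst_fill1 (τ : Sb) (C q : Mx) :
    (C.fill1 q).tsubst τ = (C.tsubst τ).fill1 (q.tsubst τ) :=
  Mx.tsubst_fill τ _ C

theorem iterCtx_succ_fill1 (σ : Sb) (C q : Mx) (n : ℕ) :
    (iterCtx σ C (n + 1)).fill1 q = (C.tsubst (Sb.pow σ n)).fill1 ((iterCtx σ C n).fill1 q) :=
  Mx.fill_fill _ _ _

theorem appsMx_tsubst (τ : Sb) (es : List Mx) (e : Mx) :
    (appsMx e es).tsubst τ = appsMx (e.tsubst τ) (es.map (Mx.tsubst τ)) := by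
  induction es generalizing e with
  | nil => rfl
  | cons x xs ih => exact ih (.app e x)

def Mx.BinderFree : Mx → Prop
  | .lam _ _ | .mu _ _ => False
  | .app q r => q.BinderFree ∧ r.BinderFree
  | _ => True

theorem Mx.BinderFree.appsMx {e : Mx} {es : List Mx} (he : e.BinderFree)
    (hes : ∀ x ∈ es, x.BinderFree) : (_root_.appsMx e es).BinderFree := by
  induction es generalizing e with
  | nil => exact he
  | cons x xs ih =>
    exact ih ⟨he, hes x List.mem_cons_self⟩ fun y hy => hes y (List.mem_cons_of_mem _ hy)

theorem Mx.BinderFree.of_fill {f : ℕ → Mx} : ∀ {C : Mx}, (C.fill f).BinderFree → C.BinderFree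
  | .atom _, _ | .kappa _, _ | .evar _, _ | .hole _, _ => trivial
  | .lam _ _, h | .mu _ _, h => h
  | .app _ _, h => ⟨Mx.BinderFree.of_fill h.1, Mx.BinderFree.of_fill h.2⟩

theorem Mx.BinderFree.tsubst (τ : Sb) : ∀ {C : Mx}, C.BinderFree → (C.tsubst τ).BinderFree
  | .atom _, _ | .kappa _, _ | .evar _, _ | .hole _, _ => trivial
  | .lam _ _, h | .mu _ _, h => h.elim
  | .app _ _, h => ⟨h.1.tsubst τ, h.2.tsubst τ⟩

section Resolution

variable {Φ : List (FSym × Cl)} {q q' : Mx}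

theorem Step.tsubst (τ : Sb) (h : Step Φ q q') : Step Φ (q.tsubst τ) (q'.tsubst τ) := by
  induction h with
  | res κ c σ hmem =>
    simpa [Mx.tsubst, Atm.subst_subst, appsMx_tsubst, Function.comp_def]
      using Step.res κ c (Sb.comp τ σ) hmem
  | appL _ ih => exact .appL ih
  | appR _ ih => exact .appR ih

theorem Step.binderFree (h : Step Φ q q') (hq : q.BinderFree) : q'.BinderFree := by
  induction h with
  | res => exact Mx.BinderFree.appsMx trivial (by simp [Mx.BinderFree])
  | appL _ ih => exact ⟨ih hq.1, hq.2⟩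
  | appR _ ih => exact ⟨hq.1, ih hq.2⟩

theorem Steps.tsubst (τ : Sb) (h : Relation.ReflTransGen (Step Φ) q q') :
    Relation.ReflTransGen (Step Φ) (q.tsubst τ) (q'.tsubst τ) :=
  h.lift _ fun _ _ hs => hs.tsubst τ

theorem Steps.binderFree (h : Relation.ReflTransGen (Step Φ) q q') (hq : q.BinderFree) :
    q'.BinderFree := by
  induction h with
  | refl => exact hq
  | tail _ hs ih => exact hs.binderFree ih

theorem Steps.fill1 (h : Relation.ReflTransGen (Step Φ) q q') :
    ∀ {C : Mx}, C.BinderFree → Relation.ReflTransGen (Step Φ) (C.fill1 q) (C.fill1 q')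
  | .atom _, _ | .kappa _, _ | .evar _, _ => .refl
  | .hole _, _ => h
  | .lam _ _, hC | .mu _ _, hC => hC.elim
  | .app C₁ C₂, hC =>
    ((Steps.fill1 h hC.1).lift (Mx.app · (C₂.fill1 q)) fun _ _ => Step.appL).trans
      ((Steps.fill1 h hC.2).lift (Mx.app (C₁.fill1 q')) fun _ _ => Step.appR)

end Resolution

/-- Iterating a simple loop: if `Φ ⊢ B →* C[σB]` is a simple loop and
`Φ ⊢ σD →* C'[D]` with `|C'| = ∅` for `D ∈ |C|`, then `Φ ⊢ σⁿD →* C'ⁿ[D]` for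
every `n ≥ 0`, where `C'ⁿ` is the `n`-fold nesting of `C'` (with the
substitution applied appropriately). -/
theorem simple_loop_iterates (Φ : List (FSym × Cl)) (hΦ : EnvWf Φ)
    (B : Atm) (σ : Sb) (C : Mx) (hC : IsAppCtx C)
    (hloop : Relation.ReflTransGen (Step Φ) (.atom B) (C.fill1 (.atom (B.subst σ))))
    (hnorm : ∀ A ∈ C.atoms, ¬ ∃ q, Step Φ (.atom A) q)
    (D : Atm) (hD : D ∈ C.atoms) (C' : Mx) (hC' : IsAppCtx C')
    (hstep : Relation.ReflTransGen (Step Φ) (.atom (D.subst σ)) (C'.fill1 (.atom D)))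
    (hCatoms : C'.atoms = []) :
    ∀ n : ℕ, Relation.ReflTransGen (Step Φ)
      (.atom (D.subst (Sb.pow σ n))) ((iterCtx σ C' n).fill1 (.atom D)) := by
  -- `IsAppCtx C'` would not do: its side arguments may still hide holes under binders.
  have hfree : C'.BinderFree := (Steps.binderFree hstep trivial).of_fill
  intro n
  induction n with
  | zero => simpa [Sb.pow, iterCtx, Atm.subst_id] using .refl
  | succ n ih =>
    have hfirst := Steps.tsubst (Sb.pow σ n) hstep
    rw [Mx.tsubst_fill1] at hfirst
    rw [Atm.subst_pow_succ, iterCtx_succ_fill1]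
    exact hfirst.trans (Steps.fill1 ih (hfree.tsubst _))
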